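/- Pruning-scan soundness: consider the relaxed game in which, for each group, the first two removed tiles must be removed together as a playable pair but the third and fourth tiles may each be removed individually whenever playable. If the board cannot be cleared under these relaxed rules, then it cannot be cleared under the original rules (where all removals are in same-group playable pairs). -/

import Mathlib

/-- A board is a finite multiset of isolated stacks; each stack is a list of
tile groups, with the head of the list being the top tile of the stack. -/
abbrev Board (G : Type*) := Multiset (List G)

variable {G : Type*} [DecidableEq G]

/-- The number of tiles of group `g` remaining on the board. -/
def tileCount (B : Board G) (g : G) : ℕ := (B.map (fun s => s.count g)).sum

/-- The total number of tiles on the board. -/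
def totalTiles (B : Board G) : ℕ := (B.map List.length).sum

/-- The board obtained by removing the (playable) top tiles of stacks `s₁` and
`s₂`, the remaining stacks being `rest`; emptied stacks disappear. -/
def play (s₁ s₂ : List G) (rest : Board G) : Board G :=
  Multiset.filter (fun s => s ≠ []) (s₁.tail ::ₘ s₂.tail ::ₘ rest)

/-- A legal move: remove two playable (top) tiles of the same group. -/
def Move (B B' : Board G) : Prop :=
  ∃ (g : G) (s₁ s₂ : List G) (rest : Board G),
    B = s₁ ::ₘ s₂ ::ₘ rest ∧ s₁.head? = some g ∧ s₂.head? = some g ∧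
    B' = play s₁ s₂ rest

/-- A board is solvable iff some sequence of legal moves empties it. -/
def Solvable (B : Board G) : Prop := Relation.ReflTransGen Move B 0

/-- All stacks are nonempty and of height at most two. -/
def HeightsOK (B : Board G) : Prop := ∀ s ∈ B, s ≠ [] ∧ s.length ≤ 2

/-- A blocked cycle: distinct groups `p 0, …, p k`, each with exactly two
remaining tiles, such that for each `i` there is a height-two stack with a
`p (i+1)`-tile (cyclically) on top of a `p i`-tile. -/
def BlockedCycle (B : Board G) {k : ℕ} (p : Fin (k + 1) → G) : Prop :=
  Function.Injective p ∧ (∀ i, tileCount B (p i) = 2) ∧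
    ∀ i, [p (i + 1), p i] ∈ B

/-- The board contains some blocked cycle. -/
def HasBlockedCycle (B : Board G) : Prop :=
  ∃ (k : ℕ) (p : Fin (k + 1) → G), BlockedCycle B p

/-- A relaxed (pruning-scan) move relative to the initial board `B₀`: either
remove a playable pair of a group no tile of which has been removed yet, or
remove a single playable tile of a group from which at least two tiles have
already been removed. -/
def RMove (B₀ : Board G) (C C' : Board G) : Prop :=
  (∃ (g : G) (s₁ s₂ : List G) (rest : Board G),
      C = s₁ ::ₘ s₂ ::ₘ rest ∧ s₁.head? = some g ∧ s₂.head? = some g ∧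
      tileCount C g = tileCount B₀ g ∧ C' = play s₁ s₂ rest) ∨
  (∃ (g : G) (s : List G) (rest : Board G),
      C = s ::ₘ rest ∧ s.head? = some g ∧
      tileCount C g + 2 ≤ tileCount B₀ g ∧
      C' = Multiset.filter (fun t => t ≠ []) (s.tail ::ₘ rest))

/-- Relaxed solvability of a position `C` in the relaxed game started at `B₀`. -/
def RSolvable (B₀ C : Board G) : Prop := Relation.ReflTransGen (RMove B₀) C 0

/-!
An original move of group `g` is simulated in the relaxed game as follows. If no tile of `g`
has been removed yet, it is a relaxed pair move. Otherwise at least two tiles of `g` are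
already gone, and the move splits into two relaxed single removals. Hence the simulation
keeps the invariant that, for every group, either none or at least two of its tiles have
been removed.
-/

def removeTop {α : Type*} (s : List α) (rest : Board α) : Board α :=
  Multiset.filter (fun t => t ≠ []) (s.tail ::ₘ rest)

def NoSingleRemoval (B₀ C : Board G) : Prop :=
  ∀ g, tileCount C g = tileCount B₀ g ∨ tileCount C g + 2 ≤ tileCount B₀ g

theorem Multiset.filter_cons_filter {α : Type*} (p : α → Prop) [DecidablePred p] (a : α)
    (s : Multiset α) : (a ::ₘ s.filter p).filter p = (a ::ₘ s).filter p := by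
  rw [Multiset.filter_cons, Multiset.filter_cons, Multiset.filter_filter]
  simp only [and_self]

theorem removeTop_cons_of_ne_nil {α : Type*} (s : List α) {t : List α} (ht : t ≠ [])
    (rest : Board α) : removeTop s (t ::ₘ rest) = t ::ₘ removeTop s rest := by
  rw [removeTop, removeTop, Multiset.cons_swap,
    Multiset.filter_cons_of_pos (p := fun t => t ≠ []) _ ht]

theorem play_eq_removeTop_removeTop {α : Type*} (s₁ s₂ : List α) (rest : Board α) :
    play s₁ s₂ rest = removeTop s₂ (removeTop s₁ rest) := by
  rw [play, removeTop, removeTop, Multiset.filter_cons_filter, Multiset.cons_swap]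

theorem tileCount_cons (s : List G) (B : Board G) (g : G) :
    tileCount (s ::ₘ B) g = s.count g + tileCount B g := by
  simp [tileCount]

theorem tileCount_filter_ne_nil (B : Board G) (g : G) :
    tileCount (B.filter fun t => t ≠ []) g = tileCount B g := by
  induction B using Multiset.induction with
  | empty => rfl
  | cons s B ih =>
    rw [Multiset.filter_cons, tileCount_cons, ← ih]
    split_ifs with hs
    · simp [tileCount_cons]
    · simp [not_not.mp hs, tileCount]

theorem tileCount_removeTop {s : List G} {g : G} (hs : s.head? = some g) (rest : Board G)
    (x : G) :
    tileCount (s ::ₘ rest) x = tileCount (removeTop s rest) x + if x = g then 1 else 0 := by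
  rw [removeTop, tileCount_filter_ne_nil, tileCount_cons, tileCount_cons,
    List.eq_cons_of_mem_head? hs, List.count_cons]
  simp only [List.tail_cons, beq_iff_eq, eq_comm (a := g)]
  omega

theorem tileCount_play {s₁ s₂ : List G} {g : G} (h₁ : s₁.head? = some g)
    (h₂ : s₂.head? = some g) (rest : Board G) (x : G) :
    tileCount (s₁ ::ₘ s₂ ::ₘ rest) x =
      tileCount (play s₁ s₂ rest) x + if x = g then 2 else 0 := by
  have hs₂ : s₂ ≠ [] := by rintro rfl; simp at h₂
  rw [play_eq_removeTop_removeTop, tileCount_removeTop h₁, removeTop_cons_of_ne_nil _ hs₂,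
    tileCount_removeTop h₂]
  split_ifs <;> rfl

theorem NoSingleRemoval.rfl {B : Board G} : NoSingleRemoval B B := fun _ => Or.inl (Eq.refl _)

theorem NoSingleRemoval.of_move {B₀ C C' : Board G} (hC : NoSingleRemoval B₀ C)
    (hm : Move C C') : NoSingleRemoval B₀ C' := by
  obtain ⟨g, s₁, s₂, rest, rfl, h₁, h₂, rfl⟩ := hm
  intro x
  have hx := tileCount_play h₁ h₂ rest x
  rcases hC x with h | h <;> split_ifs at hx <;> omega

theorem RMove.reflTransGen_play_of_removed {B₀ : Board G} {s₁ s₂ : List G} {rest : Board G}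
    {g : G} (h₁ : s₁.head? = some g) (h₂ : s₂.head? = some g)
    (hg : tileCount (s₁ ::ₘ s₂ ::ₘ rest) g + 2 ≤ tileCount B₀ g) :
    Relation.ReflTransGen (RMove B₀) (s₁ ::ₘ s₂ ::ₘ rest) (play s₁ s₂ rest) := by
  have hs₂ : s₂ ≠ [] := by rintro rfl; simp at h₂
  have hmid := removeTop_cons_of_ne_nil s₁ hs₂ rest
  have hcount := tileCount_removeTop h₁ (s₂ ::ₘ rest) g
  rw [if_pos rfl, hmid] at hcount
  have first : RMove B₀ (s₁ ::ₘ s₂ ::ₘ rest) (s₂ ::ₘ removeTop s₁ rest) :=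
    Or.inr ⟨g, s₁, s₂ ::ₘ rest, rfl, h₁, hg, hmid.symm⟩
  have second : RMove B₀ (s₂ ::ₘ removeTop s₁ rest) (play s₁ s₂ rest) :=
    Or.inr ⟨g, s₂, removeTop s₁ rest, rfl, h₂, by omega, play_eq_removeTop_removeTop ..⟩
  exact .head first (.single second)

theorem Move.reflTransGen_rMove {B₀ C C' : Board G} (hC : NoSingleRemoval B₀ C)
    (hm : Move C C') : Relation.ReflTransGen (RMove B₀) C C' := by
  obtain ⟨g, s₁, s₂, rest, rfl, h₁, h₂, rfl⟩ := hm
  rcases hC g with huntouched | hremoved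
  · exact .single (Or.inl ⟨g, s₁, s₂, rest, rfl, h₁, h₂, huntouched, rfl⟩)
  · exact RMove.reflTransGen_play_of_removed h₁ h₂ hremoved

theorem Solvable.rSolvable {B₀ C : Board G} (h : Solvable C) (hC : NoSingleRemoval B₀ C) :
    RSolvable B₀ C := by
  induction h using Relation.ReflTransGen.head_induction_on with
  | refl => exact .refl
  | head hm _ ih => exact (hm.reflTransGen_rMove hC).trans (ih (hC.of_move hm))

/-- pruning-scan soundness: a board solvable under the original
rules is solvable under the relaxed rules. -/
theorem stmt14 (B : Board G) (h : Solvable B) : RSolvable B B := h.rSolvable .rfl
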